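/- arXiv:1406.1039 — 3 statements merged into one kernel-verified Lean document; each statement's English description precedes it below -/
import Mathlib

section
/- Let N ≥ 1 be an integer, p > 2 and T ∈ ℝ. Set A_p = ((p-2)^{p-1} / (2(p-1) p^{p-1}))^{1/(p-2)}. Then on the open set U = {(x,t) ∈ ℝ^N × ℝ : x_N > 0, t < T} both functions u₁(x,t) = x_N and u₂(x,t) = A_p (T-t)^{-1/(p-2)} x_N^{p/(p-2)} are classical solutions of the parabolic p-Laplace equation; moreover for every t < T both u₁(x',x_N,t) and u₂(x',x_N,t) tend to 0 as x_N → 0⁺ (so each extends continuously by 0 to the boundary {x_N = 0}). -/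
open Real Filter

noncomputable section

/-- Divergence (in the space variables) of a vector field on Euclidean space. -/
noncomputable def sdiv {N : ℕ} (F : EuclideanSpace ℝ (Fin N) → EuclideanSpace ℝ (Fin N))
    (x : EuclideanSpace ℝ (Fin N)) : ℝ :=
  ∑ i, fderiv ℝ F x (EuclideanSpace.single i 1) i

/-- The p-Laplace flux field `|Df|^{p-2} Df` of a function of the space variable. -/
noncomputable def pField {N : ℕ} (p : ℝ) (f : EuclideanSpace ℝ (Fin N) → ℝ)
    (x : EuclideanSpace ℝ (Fin N)) : EuclideanSpace ℝ (Fin N) :=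
  ‖gradient f x‖ ^ (p - 2) • gradient f x

/-- `u` is a classical solution of the parabolic p-Laplace equation
`∂ₜ u = div (|Du|^{p-2} Du)` on `U`: at every point of `U`, `u` is differentiable in `t`,
twice differentiable in `x` (the flux field being differentiable as well, so that its
spatial divergence is meaningful), and the equation holds pointwise. -/
def IsPSolOn {N : ℕ} (p : ℝ) (u : EuclideanSpace ℝ (Fin N) → ℝ → ℝ)
    (U : Set (EuclideanSpace ℝ (Fin N) × ℝ)) : Prop :=
  ∀ q ∈ U,
    DifferentiableAt ℝ (u q.1) q.2 ∧
    DifferentiableAt ℝ (fun y => u y q.2) q.1 ∧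
    DifferentiableAt ℝ (gradient (fun y => u y q.2)) q.1 ∧
    DifferentiableAt ℝ (pField p (fun y => u y q.2)) q.1 ∧
    deriv (u q.1) q.2 = sdiv (pField p (fun y => u y q.2)) q.1

lemma euclid_smul_single {N : ℕ} (iN : Fin N) (c a : ℝ) :
    c • EuclideanSpace.single iN a = EuclideanSpace.single iN (c * a) := by
  ext j
  simp [EuclideanSpace.single_apply, mul_ite]

noncomputable def singleCLM {N : ℕ} (iN : Fin N) : ℝ →L[ℝ] EuclideanSpace ℝ (Fin N) :=
  (ContinuousLinearMap.id ℝ ℝ).smulRight (EuclideanSpace.single iN (1:ℝ))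

lemma singleCLM_apply {N : ℕ} (iN : Fin N) (c : ℝ) :
    singleCLM iN c = EuclideanSpace.single iN c := by
  simp [singleCLM, euclid_smul_single]

lemma hasGradientAt_comp_proj {N : ℕ} (iN : Fin N) (g : ℝ → ℝ) (x : EuclideanSpace ℝ (Fin N))
    {c : ℝ} (hg : HasDerivAt g c (x iN)) :
    HasGradientAt (fun y : EuclideanSpace ℝ (Fin N) => g (y iN))
      (EuclideanSpace.single iN c) x := by
  have h1 := (EuclideanSpace.proj (𝕜 := ℝ) iN).hasFDerivAt (x := x)
  have h2 := hg.comp_hasFDerivAt x h1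
  rw [hasGradientAt_iff_hasFDerivAt]
  have h3 : (InnerProductSpace.toDual ℝ _) (EuclideanSpace.single iN c)
      = c • (EuclideanSpace.proj (𝕜 := ℝ) iN) := by
    ext y
    simp [InnerProductSpace.toDual_apply_apply, EuclideanSpace.inner_single_left]
  rw [h3]; exact h2

lemma key {N : ℕ} (iN : Fin N) (p : ℝ) (g h : ℝ → ℝ) (x : EuclideanSpace ℝ (Fin N))
    (hg : ∀ᶠ s in nhds (x iN), DifferentiableAt ℝ g s)
    (hh : ∀ᶠ s in nhds (x iN), |deriv g s| ^ (p-2) * deriv g s = h s)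
    (hg2 : DifferentiableAt ℝ (deriv g) (x iN))
    (hhd : DifferentiableAt ℝ h (x iN)) :
    DifferentiableAt ℝ (fun y : EuclideanSpace ℝ (Fin N) => g (y iN)) x ∧
    DifferentiableAt ℝ (gradient (fun y : EuclideanSpace ℝ (Fin N) => g (y iN))) x ∧
    DifferentiableAt ℝ (pField p (fun y : EuclideanSpace ℝ (Fin N) => g (y iN))) x ∧
    sdiv (pField p (fun y : EuclideanSpace ℝ (Fin N) => g (y iN))) x = deriv h (x iN) := by
  have hproj : Tendsto (fun y : EuclideanSpace ℝ (Fin N) => y iN) (nhds x) (nhds (x iN)) :=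
    (EuclideanSpace.proj (𝕜 := ℝ) iN).continuous.tendsto x
  have hprojd : DifferentiableAt ℝ (fun y : EuclideanSpace ℝ (Fin N) => y iN) x :=
    (EuclideanSpace.proj (𝕜 := ℝ) iN).differentiableAt
  have hgx : ∀ᶠ y in nhds x, DifferentiableAt ℝ g (y iN) := hproj.eventually hg
  have hgrad : ∀ᶠ y in nhds x, gradient (fun z : EuclideanSpace ℝ (Fin N) => g (z iN)) y
      = EuclideanSpace.single iN (deriv g (y iN)) :=
    hgx.mono fun y hy => (hasGradientAt_comp_proj iN g y hy.hasDerivAt).gradient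
  have hpf : ∀ᶠ y in nhds x, pField p (fun z : EuclideanSpace ℝ (Fin N) => g (z iN)) y
      = EuclideanSpace.single iN (h (y iN)) := by
    filter_upwards [hgrad, hproj.eventually hh] with y h1 h2
    rw [pField, h1, EuclideanSpace.norm_single, Real.norm_eq_abs, euclid_smul_single, h2]
  refine ⟨?_, ?_, ?_, ?_⟩
  · exact (hasGradientAt_comp_proj iN g x hgx.self_of_nhds.hasDerivAt).hasFDerivAt.differentiableAt
  · have hnice : DifferentiableAt ℝ
        (fun y : EuclideanSpace ℝ (Fin N) => EuclideanSpace.single iN (deriv g (y iN))) x := by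
      simp only [← singleCLM_apply]
      exact (singleCLM iN).differentiableAt.comp x
        (hg2.comp x hprojd : DifferentiableAt ℝ (deriv g ∘ fun y : EuclideanSpace ℝ (Fin N) => y iN) x)
    exact (Filter.EventuallyEq.differentiableAt_iff hgrad).mpr hnice
  · have hnice : DifferentiableAt ℝ
        (fun y : EuclideanSpace ℝ (Fin N) => EuclideanSpace.single iN (h (y iN))) x := by
      simp only [← singleCLM_apply]
      exact (singleCLM iN).differentiableAt.comp x (hhd.comp x hprojd)
    exact (Filter.EventuallyEq.differentiableAt_iff hpf).mpr hnice
  · have hF : HasFDerivAt (fun y : EuclideanSpace ℝ (Fin N) => singleCLM iN (h (y iN)))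
        ((singleCLM iN).comp ((deriv h (x iN)) • EuclideanSpace.proj (𝕜 := ℝ) iN)) x :=
      (singleCLM iN).hasFDerivAt.comp x
        (hhd.hasDerivAt.comp_hasFDerivAt x (EuclideanSpace.proj (𝕜 := ℝ) iN).hasFDerivAt)
    have heq : fderiv ℝ (pField p (fun z : EuclideanSpace ℝ (Fin N) => g (z iN))) x
        = (singleCLM iN).comp ((deriv h (x iN)) • EuclideanSpace.proj (𝕜 := ℝ) iN) := by
      have hpf' : pField p (fun z : EuclideanSpace ℝ (Fin N) => g (z iN))
          =ᶠ[nhds x] (fun y : EuclideanSpace ℝ (Fin N) => singleCLM iN (h (y iN))) :=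
        hpf.mono fun y hy => by rw [hy, ← singleCLM_apply]
      rw [hpf'.fderiv_eq, hF.fderiv]
    rw [sdiv, heq]
    simp [singleCLM_apply, EuclideanSpace.single_apply]

theorem stmt0 (N : ℕ) (hN : 1 ≤ N) (p T : ℝ) (hp : 2 < p) :
    let iN : Fin N := ⟨N - 1, by omega⟩
    let Ap : ℝ := ((p - 2) ^ (p - 1) / (2 * (p - 1) * p ^ (p - 1))) ^ (1 / (p - 2))
    let U : Set (EuclideanSpace ℝ (Fin N) × ℝ) := {q | 0 < q.1 iN ∧ q.2 < T}
    let u₁ : EuclideanSpace ℝ (Fin N) → ℝ → ℝ := fun x _ => x iN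
    let u₂ : EuclideanSpace ℝ (Fin N) → ℝ → ℝ :=
      fun x t => Ap * (T - t) ^ (-(1 / (p - 2))) * (x iN) ^ (p / (p - 2))
    IsPSolOn p u₁ U ∧ IsPSolOn p u₂ U ∧
      ∀ x : EuclideanSpace ℝ (Fin N), ∀ t : ℝ, t < T →
        Tendsto (fun s : ℝ => u₁ (WithLp.toLp 2 (Function.update x iN s)) t)
          (nhdsWithin 0 (Set.Ioi 0)) (nhds 0) ∧
        Tendsto (fun s : ℝ => u₂ (WithLp.toLp 2 (Function.update x iN s)) t)
          (nhdsWithin 0 (Set.Ioi 0)) (nhds 0) := by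
  intro iN Ap U u₁ u₂
  have hp2 : (0:ℝ) < p - 2 := by linarith
  have hp1 : (0:ℝ) < p - 1 := by linarith
  have hp0 : (0:ℝ) < p := by linarith
  set X : ℝ := (p - 2) ^ (p - 1) with hXdef
  set Y : ℝ := p ^ (p - 1) with hYdef
  have hX : 0 < X := Real.rpow_pos_of_pos hp2 _
  have hY : 0 < Y := Real.rpow_pos_of_pos hp0 _
  have hB : (0:ℝ) < X / (2 * (p - 1) * Y) := by positivity
  have hAp : 0 < Ap := Real.rpow_pos_of_pos hB _
  have hApp2 : Ap ^ (p - 2) = X / (2 * (p - 1) * Y) := by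
    rw [show Ap = (X / (2 * (p - 1) * Y)) ^ (1 / (p - 2)) from rfl,
      ← Real.rpow_mul hB.le, one_div_mul_cancel hp2.ne', Real.rpow_one]
  have hm : (0:ℝ) < p / (p - 2) := by positivity
  refine ⟨?_, ?_, ?_⟩
  · -- u₁
    rintro ⟨x, t⟩ ⟨hx, ht⟩
    have hkey := key iN p (fun s : ℝ => s) (fun _ : ℝ => 1) x
      (Eventually.of_forall fun s => differentiableAt_id)
      (Eventually.of_forall fun s => by simp)
      (by simp only [deriv_id'']; exact differentiableAt_const 1)
      (differentiableAt_const 1)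
    exact ⟨differentiableAt_const _, hkey.1, hkey.2.1, hkey.2.2.1, by
      rw [deriv_const, hkey.2.2.2, deriv_const]⟩
  · -- u₂
    rintro ⟨x, t⟩ ⟨hx, ht⟩
    have hτ : 0 < T - t := by linarith
    set a : ℝ := x iN with hadef
    set C : ℝ := Ap * (T - t) ^ (-(1 / (p - 2))) with hCdef
    have hC : 0 < C := mul_pos hAp (Real.rpow_pos_of_pos hτ _)
    set g : ℝ → ℝ := fun s => Ap * (T - t) ^ (-(1 / (p - 2))) * s ^ (p / (p - 2)) with hgdef
    set h : ℝ → ℝ :=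
      fun s => (Ap * (T - t) ^ (-(1 / (p - 2))) * (p / (p - 2))) ^ (p - 1)
        * s ^ (2 / (p - 2) * (p - 1)) with hhdef
    have hgs : ∀ s : ℝ, 0 < s →
        HasDerivAt g (C * (p / (p - 2) * s ^ (p / (p - 2) - 1))) s := fun s hs =>
      (Real.hasDerivAt_rpow_const (Or.inl hs.ne')).const_mul C
    have hsV : ∀ᶠ s in nhds a, (0:ℝ) < s := eventually_gt_nhds hx
    have hderiv_eq : ∀ᶠ s in nhds a,
        deriv g s = C * (p / (p - 2) * s ^ (p / (p - 2) - 1)) :=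
      hsV.mono fun s hs => (hgs s hs).deriv
    have hg : ∀ᶠ s in nhds a, DifferentiableAt ℝ g s :=
      hsV.mono fun s hs => (hgs s hs).differentiableAt
    have hexp1 : p / (p - 2) - 1 = 2 / (p - 2) := by field_simp; ring
    have hexp2 : 2 / (p - 2) * (p - 1) - 1 = p / (p - 2) := by field_simp; ring
    have hh : ∀ᶠ s in nhds a, |deriv g s| ^ (p - 2) * deriv g s = h s := by
      filter_upwards [hsV, hderiv_eq] with s hs hd
      rw [hd]
      have hpos : 0 < C * (p / (p - 2) * s ^ (p / (p - 2) - 1)) :=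
        mul_pos hC (mul_pos hm (Real.rpow_pos_of_pos hs _))
      rw [abs_of_pos hpos, ← Real.rpow_add_one hpos.ne',
        show p - 2 + 1 = p - 1 by ring,
        show C * (p / (p - 2) * s ^ (p / (p - 2) - 1))
          = (C * (p / (p - 2))) * s ^ (p / (p - 2) - 1) by ring,
        Real.mul_rpow (by positivity) (by positivity),
        ← Real.rpow_mul hs.le, hexp1, hhdef]
    have hg2 : DifferentiableAt ℝ (deriv g) a := by
      refine (Filter.EventuallyEq.differentiableAt_iff hderiv_eq).mpr ?_
      exact ((Real.differentiableAt_rpow_const_of_ne _ hx.ne').const_mul _).const_mul C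
    have hhd : DifferentiableAt ℝ h a :=
      (Real.differentiableAt_rpow_const_of_ne _ hx.ne').const_mul _
    have hkey := key iN p g h x hg hh hg2 hhd
    have hder_t : HasDerivAt (u₂ x)
        (Ap * (-(1 / (p - 2)) * (T - t) ^ (-(1 / (p - 2)) - 1) * -1) * a ^ (p / (p - 2))) t := by
      have h1 : HasDerivAt (fun s : ℝ => T - s) (-1) t := (hasDerivAt_id t).const_sub T
      have h2 := (Real.hasDerivAt_rpow_const (x := T - t) (p := -(1 / (p - 2))) (Or.inl hτ.ne'))
      exact ((h2.comp t h1).const_mul Ap).mul_const _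
    have hderiv_h : deriv h a
        = (Ap * (T - t) ^ (-(1 / (p - 2))) * (p / (p - 2))) ^ (p - 1)
          * (2 / (p - 2) * (p - 1) * a ^ (2 / (p - 2) * (p - 1) - 1)) :=
      ((Real.hasDerivAt_rpow_const (x := a) (Or.inl hx.ne')).const_mul _).deriv
    refine ⟨hder_t.differentiableAt, hkey.1, hkey.2.1, hkey.2.2.1, ?_⟩
    have hAp1 : Ap ^ (p - 1) = X / (2 * (p - 1) * Y) * Ap := by
      have e1 : Ap ^ (p - 1) = Ap ^ (p - 2 + 1) := by congr 1; ring
      rw [e1, Real.rpow_add_one hAp.ne', hApp2]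
    have hmp : (p / (p - 2)) ^ (p - 1) = Y / X := Real.div_rpow hp0.le hp2.le _
    have hτ1 : ((T - t) ^ (-(1 / (p - 2)))) ^ (p - 1)
        = (T - t) ^ (-(1 / (p - 2)) - 1) := by
      rw [← Real.rpow_mul hτ.le]
      congr 1
      field_simp
      ring
    rw [hder_t.deriv, hkey.2.2.2, hderiv_h, hexp2,
      Real.mul_rpow (by positivity) hm.le,
      Real.mul_rpow hAp.le (by positivity : (0:ℝ) ≤ (T - t) ^ (-(1 / (p - 2)))),
      hAp1, hmp, hτ1]
    field_simp
  · -- boundary limits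
    intro x t ht
    constructor
    · simpa [u₁] using (show Tendsto (fun s : ℝ => s)
        (nhdsWithin 0 (Set.Ioi 0)) (nhds 0) from tendsto_id.mono_left nhdsWithin_le_nhds)
    · have h0 : Tendsto (fun s : ℝ => s ^ (p / (p - 2))) (nhdsWithin 0 (Set.Ioi 0)) (nhds 0) := by
        have hc := (Real.continuousAt_rpow_const 0 (p / (p - 2)) (Or.inr hm.le)).tendsto
        rw [Real.zero_rpow hm.ne'] at hc
        exact hc.mono_left nhdsWithin_le_nhds
      have h1 := h0.const_mul (Ap * (T - t) ^ (-(1 / (p - 2))))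
      rw [mul_zero] at h1
      simpa [u₂, Function.update_self] using h1
end
end

section
/- Let N ≥ 1 be an integer, p > 2, and let y ∈ ℝ^N, t₁ ∈ ℝ, u₁ > 0, C > 0, k > 0 and η_min ∈ (0,1]. Define η_k(x,t) = exp(-k(|x-y| - 1)) · exp(u₁^{p-2}(t - t₁)) and Θ_k(x,t) = C u₁ (1 - η_k(x,t)). If (p-1) k^{p} ≥ (N-1) k^{p-1} + C^{2-p} η_min^{2-p}, then at every point (x,t) with |x - y| ≥ 1 and η_k(x,t) ≥ η_min one has the pointwise super-solution inequality ∂_t Θ_k(x,t) - div_x(|DΘ_k(x,t)|^{p-2} DΘ_k(x,t)) ≥ 0. -/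
open Real Filter

noncomputable section

/-- `u` is a classical super-solution of the parabolic p-Laplace equation on `U`:
at every point of `U`, `u` is differentiable in `t`, twice differentiable in `x`
(the flux field being differentiable as well), and
`∂ₜ u - div (|Du|^{p-2} Du) ≥ 0` holds pointwise. -/
def IsPSupersolOn {N : ℕ} (p : ℝ) (u : EuclideanSpace ℝ (Fin N) → ℝ → ℝ)
    (U : Set (EuclideanSpace ℝ (Fin N) × ℝ)) : Prop :=
  ∀ q ∈ U,
    DifferentiableAt ℝ (u q.1) q.2 ∧
    DifferentiableAt ℝ (fun y => u y q.2) q.1 ∧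
    DifferentiableAt ℝ (gradient (fun y => u y q.2)) q.1 ∧
    DifferentiableAt ℝ (pField p (fun y => u y q.2)) q.1 ∧
    0 ≤ deriv (u q.1) q.2 - sdiv (pField p (fun y => u y q.2)) q.1

section Helpers

open RealInnerProductSpace

variable {F : Type*} [NormedAddCommGroup F] [InnerProductSpace ℝ F]

lemma hasFDerivAt_norm_sub (y x : F) (h : x - y ≠ 0) :
    HasFDerivAt (fun x' => ‖x' - y‖) (‖x - y‖⁻¹ • (innerSL ℝ (x - y))) x := by
  have h1 : HasFDerivAt (fun x' : F => x' - y) (ContinuousLinearMap.id ℝ F) x :=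
    (hasFDerivAt_id x).sub_const y
  have hinner : (⟪x - y, x - y⟫) ≠ 0 := by
    rw [real_inner_self_eq_norm_sq]
    exact pow_ne_zero 2 (norm_ne_zero_iff.mpr h)
  have h2 := ((h1.inner ℝ h1).sqrt hinner)
  have hfun : (fun x' : F => √(⟪x' - y, x' - y⟫)) = fun x' => ‖x' - y‖ := by
    funext x'
    rw [norm_eq_sqrt_real_inner]
  rw [hfun] at h2
  convert h2 using 1
  ext h'
  simp only [ContinuousLinearMap.coe_smul', Pi.smul_apply, innerSL_apply_apply,
    ContinuousLinearMap.coe_comp', Function.comp_apply, ContinuousLinearMap.prod_apply,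
    ContinuousLinearMap.coe_id', id_eq, fderivInnerCLM_apply, smul_eq_mul]
  rw [real_inner_comm (h' : F) (x - y)]
  rw [real_inner_self_eq_norm_sq, Real.sqrt_sq (norm_nonneg _)]
  have hne : ‖x - y‖ ≠ 0 := norm_ne_zero_iff.mpr h
  field_simp
  ring

lemma hasFDerivAt_radial (y x : F) (h : x - y ≠ 0) {φ : ℝ → ℝ} {φ' : ℝ}
    (hφ : HasDerivAt φ φ' ‖x - y‖) :
    HasFDerivAt (fun x' => φ ‖x' - y‖) ((φ' * ‖x - y‖⁻¹) • innerSL ℝ (x - y)) x := by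
  have := hφ.comp_hasFDerivAt x (hasFDerivAt_norm_sub y x h)
  rw [smul_smul] at this
  exact this

lemma hasGradientAt_radial [CompleteSpace F] (y x : F) (h : x - y ≠ 0) {φ : ℝ → ℝ} {φ' : ℝ}
    (hφ : HasDerivAt φ φ' ‖x - y‖) :
    HasGradientAt (fun x' => φ ‖x' - y‖) ((φ' * ‖x - y‖⁻¹) • (x - y)) x := by
  rw [hasGradientAt_iff_hasFDerivAt]
  refine (hasFDerivAt_radial y x h hφ).congr_fderiv ?_
  ext h'
  simp [InnerProductSpace.toDual_apply_apply, real_inner_smul_left]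

lemma hasFDerivAt_radial_field (y x : F) (h : x - y ≠ 0) {Φ : ℝ → ℝ} {Φ' : ℝ}
    (hΦ : HasDerivAt Φ Φ' ‖x - y‖) :
    HasFDerivAt (fun x' => Φ ‖x' - y‖ • (x' - y))
      (Φ ‖x - y‖ • ContinuousLinearMap.id ℝ F +
       ((Φ' * ‖x - y‖⁻¹) • innerSL ℝ (x - y)).smulRight (x - y)) x :=
  (hasFDerivAt_radial y x h hΦ).smul ((hasFDerivAt_id x).sub_const y)

lemma sdiv_radial_field {N : ℕ} (y x : EuclideanSpace ℝ (Fin N)) (h : x - y ≠ 0)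
    {Φ : ℝ → ℝ} {Φ' : ℝ} (hΦ : HasDerivAt Φ Φ' ‖x - y‖) :
    sdiv (fun x' => Φ ‖x' - y‖ • (x' - y)) x = ‖x - y‖ * Φ' + N * Φ ‖x - y‖ := by
  have hd := hasFDerivAt_radial_field y x h hΦ
  rw [sdiv, hd.fderiv]
  have hsum : ∑ i, (x - y) i * (x - y) i = ‖x - y‖ ^ 2 := by
    rw [EuclideanSpace.norm_eq, Real.sq_sqrt (by positivity)]
    simp [Real.norm_eq_abs, sq_abs, sq]
  have step : ∀ i, ((Φ ‖x - y‖ • ContinuousLinearMap.id ℝ (EuclideanSpace ℝ (Fin N)) +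
       ((Φ' * ‖x - y‖⁻¹) • innerSL ℝ (x - y)).smulRight (x - y)) (EuclideanSpace.single i 1)) i
      = Φ ‖x - y‖ + (Φ' * ‖x - y‖⁻¹) * ((x - y) i * (x - y) i) := by
    intro i
    simp only [ContinuousLinearMap.add_apply, ContinuousLinearMap.coe_smul',
      Pi.smul_apply, ContinuousLinearMap.coe_id', id_eq,
      ContinuousLinearMap.smulRight_apply, innerSL_apply_apply, smul_eq_mul]
    rw [PiLp.add_apply, PiLp.smul_apply, PiLp.smul_apply, EuclideanSpace.single_apply]
    simp only [if_pos rfl, smul_eq_mul, mul_one]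
    rw [EuclideanSpace.inner_single_right]
    ring_nf
    simp [real_inner_comm]
    ring
  rw [Finset.sum_congr rfl (fun i _ => step i)]
  rw [Finset.sum_add_distrib, ← Finset.mul_sum, hsum]
  simp only [Finset.sum_const, Finset.card_univ, Fintype.card_fin, nsmul_eq_mul]
  have hr : ‖x - y‖ ≠ 0 := norm_ne_zero_iff.mpr h
  field_simp
  ring

end Helpers

theorem stmt8 (N : ℕ) (hN : 1 ≤ N) (p : ℝ) (hp : 2 < p)
    (y : EuclideanSpace ℝ (Fin N)) (t₁ u1 C k ηmin : ℝ)
    (hu1 : 0 < u1) (hC : 0 < C) (hk : 0 < k) (hηmin0 : 0 < ηmin) (hηmin1 : ηmin ≤ 1)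
    (hcond : ((N : ℝ) - 1) * k ^ (p - 1) + C ^ (2 - p) * ηmin ^ (2 - p) ≤ (p - 1) * k ^ p) :
    let η : EuclideanSpace ℝ (Fin N) → ℝ → ℝ := fun x t =>
      Real.exp (-(k * (‖x - y‖ - 1))) * Real.exp (u1 ^ (p - 2) * (t - t₁))
    let Θ : EuclideanSpace ℝ (Fin N) → ℝ → ℝ := fun x t => C * u1 * (1 - η x t)
    IsPSupersolOn p Θ {q | 1 ≤ ‖q.1 - y‖ ∧ ηmin ≤ η q.1 q.2} := by
  intro η Θ
  rintro ⟨x, t⟩ ⟨hx1, hxη⟩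
  simp only [Set.mem_setOf_eq] at hx1 hxη
  simp only [η, Θ]
  set T : ℝ := Real.exp (u1 ^ (p - 2) * (t - t₁)) with hT
  have hTpos : 0 < T := Real.exp_pos _
  have hr0 : (0:ℝ) < ‖x - y‖ := lt_of_lt_of_le one_pos hx1
  have hw : x - y ≠ 0 := by
    intro hcontra
    rw [hcontra, norm_zero] at hr0
    exact lt_irrefl 0 hr0
  have hrne : ‖x - y‖ ≠ 0 := ne_of_gt hr0
  -- the time derivative
  have hΘt : HasDerivAt (fun t' => C * u1 *
      (1 - Real.exp (-(k * (‖x - y‖ - 1))) * Real.exp (u1 ^ (p - 2) * (t' - t₁))))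
      (-(C * u1 * u1 ^ (p - 2) * (Real.exp (-(k * (‖x - y‖ - 1))) * T))) t := by
    have h1 : HasDerivAt (fun t' : ℝ => u1 ^ (p - 2) * (t' - t₁)) (u1 ^ (p - 2)) t := by
      simpa using ((hasDerivAt_id t).sub_const t₁).const_mul (u1 ^ (p - 2))
    have h2 := ((h1.exp.const_mul (Real.exp (-(k * (‖x - y‖ - 1))))).const_sub 1).const_mul (C * u1)
    refine h2.congr_deriv ?_
    rw [hT]
    ring
  -- the spatial radial profile
  have hφ : ∀ ρ : ℝ, HasDerivAt (fun ρ' => C * u1 * (1 - Real.exp (-(k * (ρ' - 1))) * T))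
      (C * u1 * k * Real.exp (-(k * (ρ - 1))) * T) ρ := by
    intro ρ
    have h1 : HasDerivAt (fun ρ' : ℝ => -(k * (ρ' - 1))) (-k) ρ := by
      exact (((hasDerivAt_id ρ).sub_const 1).const_mul k).neg.congr_deriv (by ring)
    have h2 := ((h1.exp.mul_const T).const_sub 1).const_mul (C * u1)
    refine h2.congr_deriv ?_
    ring
  -- eventual nonvanishing
  have hS : ∀ᶠ x' in nhds x, x' - y ≠ 0 := by
    have hopen : IsOpen {x' : EuclideanSpace ℝ (Fin N) | (0:ℝ) < ‖x' - y‖} :=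
      isOpen_lt continuous_const ((continuous_id.sub continuous_const).norm)
    filter_upwards [hopen.mem_nhds (by simpa using hr0)] with x' hx'
    intro hcontra
    rw [hcontra, norm_zero] at hx'
    exact lt_irrefl 0 hx'
  -- the spatial function and its gradient
  have hgrad : ∀ x' : EuclideanSpace ℝ (Fin N), x' - y ≠ 0 →
      HasGradientAt (fun x'' => C * u1 * (1 - Real.exp (-(k * (‖x'' - y‖ - 1))) * T))
        ((C * u1 * k * Real.exp (-(k * (‖x' - y‖ - 1))) * T * ‖x' - y‖⁻¹) • (x' - y)) x' :=
    fun x' h => hasGradientAt_radial y x' h (hφ _)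
  have hgradeq : gradient (fun x'' => C * u1 * (1 - Real.exp (-(k * (‖x'' - y‖ - 1))) * T))
      =ᶠ[nhds x] fun x' =>
        (C * u1 * k * Real.exp (-(k * (‖x' - y‖ - 1))) * T * ‖x' - y‖⁻¹) • (x' - y) := by
    filter_upwards [hS] with x' h
    exact (hgrad x' h).gradient
  -- the flux field coincides with a radial field near x
  have hbpos : ∀ ρ : ℝ, 0 < C * u1 * k * Real.exp (-(k * (ρ - 1))) * T := by
    intro ρ
    positivity
  have hpe : ∀ x' : EuclideanSpace ℝ (Fin N), x' - y ≠ 0 →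
      pField p (fun x'' => C * u1 * (1 - Real.exp (-(k * (‖x'' - y‖ - 1))) * T)) x'
      = ((C * u1 * k * Real.exp (-(k * (‖x' - y‖ - 1))) * T) ^ (p - 1) * ‖x' - y‖⁻¹)
          • (x' - y) := by
    intro x' h
    have hrne' : ‖x' - y‖ ≠ 0 := norm_ne_zero_iff.mpr h
    have hrpos' : (0:ℝ) < ‖x' - y‖ := norm_pos_iff.mpr h
    rw [pField, (hgrad x' h).gradient]
    have hcpos : 0 < C * u1 * k * Real.exp (-(k * (‖x' - y‖ - 1))) * T * ‖x' - y‖⁻¹ := by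
      positivity
    rw [norm_smul, Real.norm_eq_abs, abs_of_pos hcpos]
    rw [smul_smul]
    congr 1
    have hnorm : C * u1 * k * Real.exp (-(k * (‖x' - y‖ - 1))) * T * ‖x' - y‖⁻¹ * ‖x' - y‖
        = C * u1 * k * Real.exp (-(k * (‖x' - y‖ - 1))) * T := by
      field_simp
    rw [hnorm]
    have hBpos := hbpos ‖x' - y‖
    have hsplit : (C * u1 * k * Real.exp (-(k * (‖x' - y‖ - 1))) * T) ^ (p - 1)
        = (C * u1 * k * Real.exp (-(k * (‖x' - y‖ - 1))) * T) ^ (p - 2)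
          * (C * u1 * k * Real.exp (-(k * (‖x' - y‖ - 1))) * T) := by
      rw [show p - 1 = (p - 2) + 1 by ring, Real.rpow_add hBpos, Real.rpow_one]
    rw [hsplit]
    ring
  have hpeq : pField p (fun x'' => C * u1 * (1 - Real.exp (-(k * (‖x'' - y‖ - 1))) * T))
      =ᶠ[nhds x] fun x' =>
        ((C * u1 * k * Real.exp (-(k * (‖x' - y‖ - 1))) * T) ^ (p - 1) * ‖x' - y‖⁻¹)
          • (x' - y) := by
    filter_upwards [hS] with x' h
    exact hpe x' h
  -- derivative of the radial flux profile Φ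
  have hb : HasDerivAt (fun ρ : ℝ => C * u1 * k * Real.exp (-(k * (ρ - 1))) * T)
      (C * u1 * k * (Real.exp (-(k * (‖x - y‖ - 1))) * -k) * T) ‖x - y‖ := by
    have h1 : HasDerivAt (fun ρ' : ℝ => -(k * (ρ' - 1))) (-k) ‖x - y‖ := by
      exact (((hasDerivAt_id ‖x - y‖).sub_const 1).const_mul k).neg.congr_deriv (by ring)
    exact (h1.exp.const_mul (C * u1 * k)).mul_const T
  have hBne : C * u1 * k * Real.exp (-(k * (‖x - y‖ - 1))) * T ≠ 0 := ne_of_gt (hbpos _)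
  have hΦ : HasDerivAt
      (fun ρ : ℝ => (C * u1 * k * Real.exp (-(k * (ρ - 1))) * T) ^ (p - 1) * ρ⁻¹)
      (C * u1 * k * (Real.exp (-(k * (‖x - y‖ - 1))) * -k) * T * (p - 1)
            * (C * u1 * k * Real.exp (-(k * (‖x - y‖ - 1))) * T) ^ (p - 1 - 1) * ‖x - y‖⁻¹
        + (C * u1 * k * Real.exp (-(k * (‖x - y‖ - 1))) * T) ^ (p - 1) * (-(‖x - y‖ ^ 2)⁻¹))
      ‖x - y‖ :=
    (hb.rpow_const (Or.inl hBne)).mul (hasDerivAt_inv hrne)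
  -- differentiability of the gradient (as a radial field)
  have hΦg : HasDerivAt
      (fun ρ : ℝ => C * u1 * k * Real.exp (-(k * (ρ - 1))) * T * ρ⁻¹)
      (C * u1 * k * (Real.exp (-(k * (‖x - y‖ - 1))) * -k) * T * ‖x - y‖⁻¹
        + C * u1 * k * Real.exp (-(k * (‖x - y‖ - 1))) * T * (-(‖x - y‖ ^ 2)⁻¹)) ‖x - y‖ :=
    hb.mul (hasDerivAt_inv hrne)
  refine ⟨hΘt.differentiableAt, (hgrad x hw).differentiableAt, ?_, ?_, ?_⟩
  · exact hgradeq.differentiableAt_iff.mpr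
      (hasFDerivAt_radial_field y x hw hΦg).differentiableAt
  · exact hpeq.differentiableAt_iff.mpr
      (hasFDerivAt_radial_field y x hw hΦ).differentiableAt
  · -- the inequality
    have hsval : sdiv (pField p
        (fun x'' => C * u1 * (1 - Real.exp (-(k * (‖x'' - y‖ - 1))) * T))) x
        = ‖x - y‖ * (C * u1 * k * (Real.exp (-(k * (‖x - y‖ - 1))) * -k) * T * (p - 1)
            * (C * u1 * k * Real.exp (-(k * (‖x - y‖ - 1))) * T) ^ (p - 1 - 1) * ‖x - y‖⁻¹
          + (C * u1 * k * Real.exp (-(k * (‖x - y‖ - 1))) * T) ^ (p - 1) * (-(‖x - y‖ ^ 2)⁻¹))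
          + N * ((C * u1 * k * Real.exp (-(k * (‖x - y‖ - 1))) * T) ^ (p - 1) * ‖x - y‖⁻¹) := by
      rw [sdiv, hpeq.fderiv_eq, ← sdiv]
      exact sdiv_radial_field y x hw hΦ
    rw [hsval, hΘt.deriv]
    -- abbreviations
    set r : ℝ := ‖x - y‖ with hrdef
    set η₀ : ℝ := Real.exp (-(k * (r - 1))) * T with hη₀
    have hη₀pos : 0 < η₀ := by positivity
    have hηmin : ηmin ≤ η₀ := hxη
    have hB : C * u1 * k * Real.exp (-(k * (r - 1))) * T = C * u1 * k * η₀ := by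
      rw [hη₀]; ring
    rw [hB]
    have hBpos : (0:ℝ) < C * u1 * k * η₀ := by positivity
    -- rpow algebra
    have hsplit1 : (C * u1 * k * η₀) ^ (p - 1)
        = C ^ (p - 1) * u1 ^ (p - 1) * k ^ (p - 1) * η₀ ^ (p - 1) := by
      rw [Real.mul_rpow (by positivity) (le_of_lt hη₀pos),
        Real.mul_rpow (by positivity) (le_of_lt hk),
        Real.mul_rpow (le_of_lt hC) (le_of_lt hu1)]
    have hsplit2 : (C * u1 * k * η₀) ^ (p - 1 - 1) * (C * u1 * k * η₀)
        = (C * u1 * k * η₀) ^ (p - 1) := by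
      rw [show p - 1 = (p - 1 - 1) + 1 by ring]
      rw [Real.rpow_add hBpos, Real.rpow_one]
      ring_nf
    have hu1split : u1 * u1 ^ (p - 2) = u1 ^ (p - 1) := by
      rw [show p - 1 = (p - 2) + 1 by ring, Real.rpow_add hu1, Real.rpow_one]
      ring
    have hCsplit : C ^ (p - 1) * C ^ (2 - p) = C := by
      rw [← Real.rpow_add hC, show p - 1 + (2 - p) = 1 by ring, Real.rpow_one]
    have hηsplit : η₀ ^ (p - 1) * η₀ ^ (2 - p) = η₀ := by
      rw [← Real.rpow_add hη₀pos, show p - 1 + (2 - p) = 1 by ring, Real.rpow_one]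
    have hksplit : k * k ^ (p - 1) = k ^ p := by
      rw [show p = 1 + (p - 1) by ring, Real.rpow_add hk, Real.rpow_one]
      ring_nf
    -- key comparison
    have hkP : (0:ℝ) ≤ k ^ (p - 1) := Real.rpow_nonneg (le_of_lt hk) _
    have hdivr : ((N:ℝ) - 1) / r ≤ (N:ℝ) - 1 := by
      apply div_le_self
      · have : (1:ℝ) ≤ (N:ℝ) := by exact_mod_cast hN
        linarith
      · exact hx1
    have hη2 : η₀ ^ (2 - p) ≤ ηmin ^ (2 - p) :=
      Real.rpow_le_rpow_of_nonpos hηmin0 hηmin (by linarith)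
    have key : C ^ (2 - p) * η₀ ^ (2 - p) ≤ ((p - 1) * k - ((N:ℝ) - 1) / r) * k ^ (p - 1) := by
      have h1 : C ^ (2 - p) * η₀ ^ (2 - p) ≤ C ^ (2 - p) * ηmin ^ (2 - p) :=
        mul_le_mul_of_nonneg_left hη2 (le_of_lt (Real.rpow_pos_of_pos hC _))
      have h2 : C ^ (2 - p) * ηmin ^ (2 - p) ≤ (p - 1) * k ^ p - ((N:ℝ) - 1) * k ^ (p - 1) := by
        linarith
      have h3 : (p - 1) * k ^ p - ((N:ℝ) - 1) * k ^ (p - 1)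
          = ((p - 1) * k - ((N:ℝ) - 1)) * k ^ (p - 1) := by
        rw [← hksplit]; ring
      have h4 : ((p - 1) * k - ((N:ℝ) - 1)) * k ^ (p - 1)
          ≤ ((p - 1) * k - ((N:ℝ) - 1) / r) * k ^ (p - 1) :=
        mul_le_mul_of_nonneg_right (by linarith) hkP
      linarith
    -- final inequality
    have hmain : C * u1 ^ (p - 1) * η₀
        ≤ (C * u1 * k * η₀) ^ (p - 1) * ((p - 1) * k - ((N:ℝ) - 1) / r) := by
      have hpos : (0:ℝ) ≤ C ^ (p - 1) * η₀ ^ (p - 1) * u1 ^ (p - 1) := by positivity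
      have h5 := mul_le_mul_of_nonneg_left key hpos
      have e1 : C ^ (p - 1) * η₀ ^ (p - 1) * u1 ^ (p - 1) * (C ^ (2 - p) * η₀ ^ (2 - p))
          = C * u1 ^ (p - 1) * η₀ := by
        have e0 : C ^ (p - 1) * η₀ ^ (p - 1) * u1 ^ (p - 1) * (C ^ (2 - p) * η₀ ^ (2 - p))
            = (C ^ (p - 1) * C ^ (2 - p)) * (η₀ ^ (p - 1) * η₀ ^ (2 - p)) * u1 ^ (p - 1) := by
          ring
        rw [e0, hCsplit, hηsplit]
        ring
      have e2 : C ^ (p - 1) * η₀ ^ (p - 1) * u1 ^ (p - 1)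
            * (((p - 1) * k - ((N:ℝ) - 1) / r) * k ^ (p - 1))
          = (C * u1 * k * η₀) ^ (p - 1) * ((p - 1) * k - ((N:ℝ) - 1) / r) := by
        rw [hsplit1]
        ring
      rw [← e1, ← e2]
      exact h5
    -- put things together
    have hDval : -(C * u1 * u1 ^ (p - 2) * (Real.exp (-(k * (r - 1))) * T))
        = -(C * u1 ^ (p - 1) * η₀) := by
      rw [← hη₀, ← hu1split]; ring
    rw [hDval]
    have hSval2 : r * (C * u1 * k * (Real.exp (-(k * (r - 1))) * -k) * T * (p - 1)
            * (C * u1 * k * η₀) ^ (p - 1 - 1) * r⁻¹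
          + (C * u1 * k * η₀) ^ (p - 1) * (-(r ^ 2)⁻¹))
          + N * ((C * u1 * k * η₀) ^ (p - 1) * r⁻¹)
        = (C * u1 * k * η₀) ^ (p - 1) * (((N:ℝ) - 1) / r - (p - 1) * k) := by
      have he : C * u1 * k * (Real.exp (-(k * (r - 1))) * -k) * T
          = -k * (C * u1 * k * η₀) := by rw [hη₀]; ring
      rw [he]
      have habs : ∀ (B X Y : ℝ), X * B = Y →
          r * (-k * B * (p - 1) * X * r⁻¹ + Y * (-(r ^ 2)⁻¹)) + (N:ℝ) * (Y * r⁻¹)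
          = Y * (((N:ℝ) - 1) / r - (p - 1) * k) := by
        intro B X Y hXY
        subst hXY
        field_simp
        ring
      exact habs _ _ _ hsplit2
    rw [hSval2]
    have hfin : (C * u1 * k * η₀) ^ (p - 1) * (((N:ℝ) - 1) / r - (p - 1) * k)
        = -((C * u1 * k * η₀) ^ (p - 1) * ((p - 1) * k - ((N:ℝ) - 1) / r)) := by ring
    rw [hfin]
    linarith [hmain]
end
end

section
/- Let N ≥ 1 be an integer, p > 2, Λ ≥ 1, and let Q be an invertible real N×N matrix with operator norms ‖Q‖ ≤ Λ and ‖Q⁻¹‖ ≤ Λ. Define A : ℝ^N → ℝ^N by A(η) = |Qη|^{p-2} Qᵀ Q η for η ≠ 0 and A(0) = 0. Then: (i) A(η)·η ≥ Λ^{-p} |η|^{p} for all η; (ii) |A(η)| ≤ Λ^{p} |η|^{p-1} for all η; (iii) A(sη) = s^{p-1} A(η) for all s > 0 and all η; (iv) A is differentiable at every η ≠ 0, and its derivative A'(η) satisfies ⟨A'(η)ξ, ξ⟩ ≥ Λ^{-p} |η|^{p-2} |ξ|² for all ξ ∈ ℝ^N, and ‖A'(η)‖ ≤ (p-1) Λ^{p}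 |η|^{p-2}. -/
open Real

noncomputable section

set_option maxHeartbeats 2000000 in
theorem stmt12 (N : ℕ) (hN : 1 ≤ N) (p Λ : ℝ) (hp : 2 < p) (hΛ : 1 ≤ Λ)
    (Q : Matrix (Fin N) (Fin N) ℝ) (hQ : IsUnit Q)
    (hQnorm : ‖Matrix.toEuclideanCLM (𝕜 := ℝ) Q‖ ≤ Λ)
    (hQinv : ‖Matrix.toEuclideanCLM (𝕜 := ℝ) Q⁻¹‖ ≤ Λ) :
    let QL : EuclideanSpace ℝ (Fin N) →L[ℝ] EuclideanSpace ℝ (Fin N) :=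
      Matrix.toEuclideanCLM (𝕜 := ℝ) Q
    let QtL : EuclideanSpace ℝ (Fin N) →L[ℝ] EuclideanSpace ℝ (Fin N) :=
      Matrix.toEuclideanCLM (𝕜 := ℝ) Q.transpose
    let A : EuclideanSpace ℝ (Fin N) → EuclideanSpace ℝ (Fin N) :=
      fun η => ‖QL η‖ ^ (p - 2) • QtL (QL η)
    -- `A 0 = 0`
    A 0 = 0 ∧
    -- (i) coercivity
    (∀ η : EuclideanSpace ℝ (Fin N), Λ ^ (-p) * ‖η‖ ^ p ≤ (inner ℝ (A η) η : ℝ)) ∧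
    -- (ii) growth
    (∀ η : EuclideanSpace ℝ (Fin N), ‖A η‖ ≤ Λ ^ p * ‖η‖ ^ (p - 1)) ∧
    -- (iii) homogeneity of degree p-1
    (∀ s : ℝ, 0 < s → ∀ η : EuclideanSpace ℝ (Fin N), A (s • η) = s ^ (p - 1) • A η) ∧
    -- (iv) differentiability away from 0, with degenerate ellipticity and boundedness
    (∀ η : EuclideanSpace ℝ (Fin N), η ≠ 0 →
      DifferentiableAt ℝ A η ∧
      (∀ ξ : EuclideanSpace ℝ (Fin N),
        Λ ^ (-p) * ‖η‖ ^ (p - 2) * ‖ξ‖ ^ 2 ≤ (inner ℝ (fderiv ℝ A η ξ) ξ : ℝ)) ∧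
      ‖fderiv ℝ A η‖ ≤ (p - 1) * Λ ^ p * ‖η‖ ^ (p - 2)) := by
  intro QL QtL A
  have hΛ0 : (0 : ℝ) < Λ := lt_of_lt_of_le one_pos hΛ
  -- QtL is the adjoint of QL
  have hadj : QtL = ContinuousLinearMap.adjoint QL := by
    show Matrix.toEuclideanCLM (𝕜 := ℝ) Q.transpose = _
    rw [show Q.transpose = star Q from by
          rw [Matrix.star_eq_conjTranspose, Matrix.conjTranspose_eq_transpose_of_trivial],
        map_star, ContinuousLinearMap.star_eq_adjoint]
  have hinner : ∀ x y : EuclideanSpace ℝ (Fin N),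
      (inner ℝ (QtL x) y : ℝ) = inner ℝ x (QL y) := by
    intro x y; rw [hadj]; exact ContinuousLinearMap.adjoint_inner_left QL y x
  have hQtnorm : ‖QtL‖ ≤ Λ := by
    rw [hadj]
    calc ‖ContinuousLinearMap.adjoint QL‖ = ‖QL‖ := ContinuousLinearMap.adjoint.norm_map _
      _ ≤ Λ := hQnorm
  -- inverse: lower bound
  have hQinvL : ∀ η : EuclideanSpace ℝ (Fin N),
      Matrix.toEuclideanCLM (𝕜 := ℝ) Q⁻¹ (QL η) = η := by
    intro η
    have h : Q⁻¹ * Q = 1 := Matrix.nonsing_inv_mul Q ((Matrix.isUnit_iff_isUnit_det Q).mp hQ)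
    have h2 := congrArg (Matrix.toEuclideanCLM (𝕜 := ℝ)) h
    rw [map_mul, map_one] at h2
    calc Matrix.toEuclideanCLM (𝕜 := ℝ) Q⁻¹ (QL η)
        = (Matrix.toEuclideanCLM (𝕜 := ℝ) Q⁻¹ * Matrix.toEuclideanCLM (𝕜 := ℝ) Q) η := rfl
      _ = η := by rw [h2]; rfl
  have hlow : ∀ η : EuclideanSpace ℝ (Fin N), ‖η‖ ≤ Λ * ‖QL η‖ := by
    intro η
    calc ‖η‖ = ‖Matrix.toEuclideanCLM (𝕜 := ℝ) Q⁻¹ (QL η)‖ := by rw [hQinvL]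
      _ ≤ ‖Matrix.toEuclideanCLM (𝕜 := ℝ) Q⁻¹‖ * ‖QL η‖ := ContinuousLinearMap.le_opNorm _ _
      _ ≤ Λ * ‖QL η‖ := mul_le_mul_of_nonneg_right hQinv (norm_nonneg _)
  have hup : ∀ η : EuclideanSpace ℝ (Fin N), ‖QL η‖ ≤ Λ * ‖η‖ := by
    intro η
    calc ‖QL η‖ ≤ ‖QL‖ * ‖η‖ := ContinuousLinearMap.le_opNorm _ _
      _ ≤ Λ * ‖η‖ := mul_le_mul_of_nonneg_right hQnorm (norm_nonneg _)
  have hQLne : ∀ η : EuclideanSpace ℝ (Fin N), η ≠ 0 → QL η ≠ 0 := by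
    intro η hη hcon
    apply hη
    have := hlow η
    rw [hcon, norm_zero, mul_zero] at this
    exact norm_le_zero_iff.mp this
  have hA0 : A 0 = 0 := by
    show ‖QL 0‖ ^ (p - 2) • QtL (QL 0) = 0
    rw [map_zero, map_zero, smul_zero]
  -- the scalar identity: ‖QL η‖^(p-2) * ‖QL η‖^2 = ‖QL η‖^p (nat square)
  have hpow : ∀ t : ℝ, 0 ≤ t → t ^ (p - 2) * t ^ (2 : ℕ) = t ^ p := by
    intro t ht
    rcases eq_or_lt_of_le ht with h | h
    · rw [← h, zero_rpow (by linarith), zero_rpow (by linarith), zero_mul]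
    · rw [← Real.rpow_natCast t 2, ← Real.rpow_add h]
      norm_num
  refine ⟨hA0, ?_, ?_, ?_, ?_⟩
  · -- (i)
    intro η
    have h1 : (inner ℝ (A η) η : ℝ) = ‖QL η‖ ^ (p - 2) * ‖QL η‖ ^ (2 : ℕ) := by
      show (inner ℝ ((‖QL η‖ ^ (p - 2) : ℝ) • QtL (QL η)) η : ℝ) = _
      rw [real_inner_smul_left, hinner, real_inner_self_eq_norm_sq]
    rw [h1, hpow _ (norm_nonneg _)]
    have h2 : ‖η‖ ^ p ≤ (Λ * ‖QL η‖) ^ p :=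
      Real.rpow_le_rpow (norm_nonneg _) (hlow η) (by linarith)
    rw [Real.mul_rpow hΛ0.le (norm_nonneg _)] at h2
    calc Λ ^ (-p) * ‖η‖ ^ p ≤ Λ ^ (-p) * (Λ ^ p * ‖QL η‖ ^ p) :=
          mul_le_mul_of_nonneg_left h2 (Real.rpow_nonneg hΛ0.le _)
      _ = (Λ ^ (-p) * Λ ^ p) * ‖QL η‖ ^ p := by ring
      _ = ‖QL η‖ ^ p := by rw [← Real.rpow_add hΛ0]; norm_num
  · -- (ii)
    intro η
    have h1 : ‖A η‖ = ‖QL η‖ ^ (p - 2) * ‖QtL (QL η)‖ := by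
      show ‖(‖QL η‖ ^ (p - 2) : ℝ) • QtL (QL η)‖ = _
      rw [norm_smul, Real.norm_eq_abs, abs_of_nonneg (Real.rpow_nonneg (norm_nonneg _) _)]
    have h2 : ‖QtL (QL η)‖ ≤ Λ * ‖QL η‖ := by
      calc ‖QtL (QL η)‖ ≤ ‖QtL‖ * ‖QL η‖ := ContinuousLinearMap.le_opNorm _ _
        _ ≤ Λ * ‖QL η‖ := mul_le_mul_of_nonneg_right hQtnorm (norm_nonneg _)
    have h3 : ‖QL η‖ ^ (p - 2) * ‖QL η‖ = ‖QL η‖ ^ (p - 1) := by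
      rcases eq_or_lt_of_le (norm_nonneg (QL η)) with h | h
      · rw [← h, zero_rpow (by linarith), zero_rpow (by linarith), zero_mul]
      · have hh := Real.rpow_add h (p - 2) 1
        rw [Real.rpow_one] at hh
        rw [← hh]; congr 1; ring
    have h4 : ‖QL η‖ ^ (p - 1) ≤ (Λ * ‖η‖) ^ (p - 1) :=
      Real.rpow_le_rpow (norm_nonneg _) (hup η) (by linarith)
    rw [Real.mul_rpow hΛ0.le (norm_nonneg _)] at h4
    calc ‖A η‖ = ‖QL η‖ ^ (p - 2) * ‖QtL (QL η)‖ := h1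
      _ ≤ ‖QL η‖ ^ (p - 2) * (Λ * ‖QL η‖) :=
          mul_le_mul_of_nonneg_left h2 (Real.rpow_nonneg (norm_nonneg _) _)
      _ = Λ * (‖QL η‖ ^ (p - 2) * ‖QL η‖) := by ring
      _ = Λ * ‖QL η‖ ^ (p - 1) := by rw [h3]
      _ ≤ Λ * (Λ ^ (p - 1) * ‖η‖ ^ (p - 1)) := mul_le_mul_of_nonneg_left h4 hΛ0.le
      _ = (Λ ^ (1 : ℝ) * Λ ^ (p - 1)) * ‖η‖ ^ (p - 1) := by rw [Real.rpow_one]; ring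
      _ = Λ ^ p * ‖η‖ ^ (p - 1) := by rw [← Real.rpow_add hΛ0]; norm_num
  · -- (iii)
    intro s hs η
    show (‖QL (s • η)‖ ^ (p - 2) : ℝ) • QtL (QL (s • η)) = _
    rw [map_smul, map_smul, norm_smul, Real.norm_eq_abs, abs_of_pos hs,
      Real.mul_rpow hs.le (norm_nonneg _), smul_comm, smul_smul, smul_smul]
    have hss : s * s ^ (p - 2) = s ^ (p - 1) := by
      have h := Real.rpow_add hs 1 (p - 2)
      rw [Real.rpow_one] at h
      rw [← h]; congr 1; ring
    rw [← mul_assoc, hss]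
  · -- (iv)
    intro η hη
    have hQη : QL η ≠ 0 := hQLne η hη
    have ht : 0 < ‖QL η‖ := norm_pos_iff.mpr hQη
    have ht2 : (0:ℝ) < ‖QL η‖ ^ 2 := by positivity
    -- derivative of x ↦ ‖QL x‖ ^ 2
    have hh : HasFDerivAt (fun x => ‖QL x‖ ^ 2)
        ((2:ℕ) • (innerSL ℝ (QL η)).comp QL) η := QL.hasFDerivAt.norm_sq
    have hφ : HasDerivAt (fun y : ℝ => y ^ ((p-2)/2))
        (((p-2)/2) * (‖QL η‖ ^ 2) ^ ((p-2)/2 - 1)) (‖QL η‖ ^ 2) :=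
      Real.hasDerivAt_rpow_const (Or.inl (ne_of_gt ht2))
    have hcomp := hφ.comp_hasFDerivAt η hh
    have hfeq : (fun x => ((‖QL x‖ ^ 2 : ℝ)) ^ ((p-2)/2)) =
        fun x => ‖QL x‖ ^ (p - 2) := by
      funext x
      rw [← Real.rpow_natCast ‖QL x‖ 2, ← Real.rpow_mul (norm_nonneg _)]
      congr 1; push_cast; ring
    rw [show ((fun y : ℝ => y ^ ((p-2)/2)) ∘ (fun x => ‖QL x‖ ^ 2)) =
        fun x => ((‖QL x‖ ^ 2 : ℝ)) ^ ((p-2)/2) from rfl, hfeq] at hcomp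
    have hA : HasFDerivAt A
        ((‖QL η‖ ^ (p-2)) • (QtL.comp QL) +
          ((((p-2)/2) * (‖QL η‖ ^ 2) ^ ((p-2)/2 - 1)) •
            ((2:ℕ) • (innerSL ℝ (QL η)).comp QL)).smulRight ((QtL.comp QL) η)) η :=
      hcomp.smul (QtL.comp QL).hasFDerivAt
    have hD := hA.fderiv
    -- scalar simplification
    have hcc : 2 * (((p-2)/2) * (‖QL η‖ ^ 2) ^ ((p-2)/2 - 1)) =
        (p-2) * ‖QL η‖ ^ (p-4) := by
      rw [← Real.rpow_natCast ‖QL η‖ 2, ← Real.rpow_mul (norm_nonneg _),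
        show ((2:ℕ):ℝ) * ((p-2)/2 - 1) = p - 4 from by push_cast; ring]
      ring
    have happ : ∀ ξ, fderiv ℝ A η ξ = ‖QL η‖ ^ (p-2) • QtL (QL ξ) +
        ((((p-2)/2) * (‖QL η‖ ^ 2) ^ ((p-2)/2 - 1)) *
          (2 * (inner ℝ (QL η) (QL ξ) : ℝ))) • QtL (QL η) := by
      intro ξ
      rw [hD]
      simp only [ContinuousLinearMap.add_apply, ContinuousLinearMap.coe_smul',
        Pi.smul_apply, ContinuousLinearMap.smulRight_apply,
        ContinuousLinearMap.coe_comp', Function.comp_apply, ContinuousLinearMap.smul_apply,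
        innerSL_apply_apply, smul_eq_mul, nsmul_eq_mul, Nat.cast_ofNat]
    refine ⟨hA.differentiableAt, ?_, ?_⟩
    · -- ellipticity
      intro ξ
      have hval : (inner ℝ (fderiv ℝ A η ξ) ξ : ℝ) =
          ‖QL η‖ ^ (p-2) * ‖QL ξ‖ ^ 2 +
            ((p-2) * ‖QL η‖ ^ (p-4)) * (inner ℝ (QL η) (QL ξ) : ℝ) ^ 2 := by
        rw [happ ξ, inner_add_left, real_inner_smul_left, real_inner_smul_left,
          hinner, hinner, real_inner_self_eq_norm_sq]
        linear_combination ((inner ℝ (QL η) (QL ξ) : ℝ) ^ 2) * hcc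
      rw [hval]
      have hb1 : ‖η‖ ^ (p-2) ≤ Λ ^ (p-2) * ‖QL η‖ ^ (p-2) := by
        have := Real.rpow_le_rpow (norm_nonneg η) (hlow η) (by linarith : (0:ℝ) ≤ p - 2)
        rwa [Real.mul_rpow hΛ0.le (norm_nonneg _)] at this
      have hb2 : ‖ξ‖ ^ 2 ≤ Λ ^ (2:ℕ) * ‖QL ξ‖ ^ 2 := by
        have h := hlow ξ
        nlinarith [norm_nonneg ξ, norm_nonneg (QL ξ), hΛ0]
      have hone : Λ ^ (-p) * Λ ^ (p-2) * Λ ^ (2:ℕ) = 1 := by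
        rw [← Real.rpow_natCast Λ 2, ← Real.rpow_add hΛ0, ← Real.rpow_add hΛ0]
        rw [show -p + (p - 2) + ((2:ℕ):ℝ) = 0 from by push_cast; ring, Real.rpow_zero]
      have hnn : (0:ℝ) ≤ ((p-2) * ‖QL η‖ ^ (p-4)) * (inner ℝ (QL η) (QL ξ) : ℝ) ^ 2 := by
        have h1 : (0:ℝ) ≤ ‖QL η‖ ^ (p-4) := Real.rpow_nonneg (norm_nonneg _) _
        exact mul_nonneg (mul_nonneg (by linarith) h1) (sq_nonneg _)
      calc Λ ^ (-p) * ‖η‖ ^ (p-2) * ‖ξ‖ ^ 2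
          ≤ Λ ^ (-p) * (Λ ^ (p-2) * ‖QL η‖ ^ (p-2)) * (Λ ^ (2:ℕ) * ‖QL ξ‖ ^ 2) := by
            apply mul_le_mul _ hb2 (by positivity) _
            · exact mul_le_mul_of_nonneg_left hb1 (Real.rpow_nonneg hΛ0.le _)
            · positivity
        _ = (Λ ^ (-p) * Λ ^ (p-2) * Λ ^ (2:ℕ)) * (‖QL η‖ ^ (p-2) * ‖QL ξ‖ ^ 2) := by ring
        _ = ‖QL η‖ ^ (p-2) * ‖QL ξ‖ ^ 2 := by rw [hone, one_mul]
        _ ≤ _ := le_add_of_nonneg_right hnn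
    · -- operator norm bound
      have hbound0 : (0:ℝ) ≤ (p - 1) * Λ ^ p * ‖η‖ ^ (p-2) := by
        have h1 : (0:ℝ) ≤ ‖η‖ ^ (p-2) := Real.rpow_nonneg (norm_nonneg _) _
        have h2 : (0:ℝ) ≤ Λ ^ p := Real.rpow_nonneg hΛ0.le _
        exact mul_nonneg (mul_nonneg (by linarith) h2) h1
      apply ContinuousLinearMap.opNorm_le_bound _ hbound0
      intro ξ
      rw [happ ξ]
      have hw : |(inner ℝ (QL η) (QL ξ) : ℝ)| ≤ ‖QL η‖ * ‖QL ξ‖ := abs_real_inner_le_norm _ _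
      have hBξ : ‖QtL (QL ξ)‖ ≤ Λ * ‖QL ξ‖ := by
        calc ‖QtL (QL ξ)‖ ≤ ‖QtL‖ * ‖QL ξ‖ := ContinuousLinearMap.le_opNorm _ _
          _ ≤ Λ * ‖QL ξ‖ := mul_le_mul_of_nonneg_right hQtnorm (norm_nonneg _)
      have hBη : ‖QtL (QL η)‖ ≤ Λ * ‖QL η‖ := by
        calc ‖QtL (QL η)‖ ≤ ‖QtL‖ * ‖QL η‖ := ContinuousLinearMap.le_opNorm _ _
          _ ≤ Λ * ‖QL η‖ := mul_le_mul_of_nonneg_right hQtnorm (norm_nonneg _)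
      have htt : ‖QL η‖ ^ (p-4) * ‖QL η‖ ^ (2:ℕ) = ‖QL η‖ ^ (p-2) := by
        rw [← Real.rpow_natCast ‖QL η‖ 2, ← Real.rpow_add ht]
        congr 1; push_cast; ring
      have hsabs : |(((p-2)/2) * (‖QL η‖ ^ 2) ^ ((p-2)/2 - 1)) *
          (2 * (inner ℝ (QL η) (QL ξ) : ℝ))| ≤
          (p-2) * ‖QL η‖ ^ (p-4) * (‖QL η‖ * ‖QL ξ‖) := by
        have hc0 : (0:ℝ) ≤ (p-2) * ‖QL η‖ ^ (p-4) := by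
          have := Real.rpow_nonneg (norm_nonneg (QL η)) (p-4); nlinarith
        rw [show (((p-2)/2) * (‖QL η‖ ^ 2) ^ ((p-2)/2 - 1)) *
            (2 * (inner ℝ (QL η) (QL ξ) : ℝ)) =
            (2 * (((p-2)/2) * (‖QL η‖ ^ 2) ^ ((p-2)/2 - 1))) *
              (inner ℝ (QL η) (QL ξ) : ℝ) from by ring, hcc, abs_mul,
          abs_of_nonneg hc0]
        exact mul_le_mul_of_nonneg_left hw hc0
      have hup' := hup η
      have hupξ := hup ξ
      calc ‖(‖QL η‖ ^ (p-2) : ℝ) • QtL (QL ξ) +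
            ((((p-2)/2) * (‖QL η‖ ^ 2) ^ ((p-2)/2 - 1)) *
              (2 * (inner ℝ (QL η) (QL ξ) : ℝ))) • QtL (QL η)‖
          ≤ ‖QL η‖ ^ (p-2) * ‖QtL (QL ξ)‖ +
            ((p-2) * ‖QL η‖ ^ (p-4) * (‖QL η‖ * ‖QL ξ‖)) * ‖QtL (QL η)‖ := by
            refine le_trans (norm_add_le _ _) (add_le_add ?_ ?_)
            · rw [norm_smul, Real.norm_eq_abs,
                abs_of_nonneg (Real.rpow_nonneg (norm_nonneg _) _)]
            · rw [norm_smul, Real.norm_eq_abs]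
              exact mul_le_mul_of_nonneg_right hsabs (norm_nonneg _)
        _ ≤ ‖QL η‖ ^ (p-2) * (Λ * ‖QL ξ‖) +
            ((p-2) * ‖QL η‖ ^ (p-4) * (‖QL η‖ * ‖QL ξ‖)) * (Λ * ‖QL η‖) := by
            refine add_le_add ?_ ?_
            · exact mul_le_mul_of_nonneg_left hBξ (Real.rpow_nonneg (norm_nonneg _) _)
            · refine mul_le_mul_of_nonneg_left hBη ?_
              exact mul_nonneg (mul_nonneg (by linarith)
                (Real.rpow_nonneg (norm_nonneg _) _))
                (mul_nonneg (norm_nonneg _) (norm_nonneg _))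
        _ = (p-1) * Λ * (‖QL η‖ ^ (p-2) * ‖QL ξ‖) := by
            rw [← htt]; push_cast; ring
        _ ≤ (p-1) * Λ * ((Λ * ‖η‖) ^ (p-2) * (Λ * ‖ξ‖)) := by
            refine mul_le_mul_of_nonneg_left ?_ (by nlinarith)
            refine mul_le_mul ?_ hupξ (norm_nonneg _) (Real.rpow_nonneg (by positivity) _)
            exact Real.rpow_le_rpow (norm_nonneg _) hup' (by linarith)
        _ = ((p-1) * Λ ^ p * ‖η‖ ^ (p-2)) * ‖ξ‖ := by
            rw [Real.mul_rpow hΛ0.le (norm_nonneg _),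
              show Λ ^ p = Λ ^ (p-2) * Λ ^ (1:ℝ) * Λ ^ (1:ℝ) from by
                rw [← Real.rpow_add hΛ0, ← Real.rpow_add hΛ0]; congr 1; ring,
              Real.rpow_one]
            ring
end
end
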